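/- Let G be a nontrivial strongly connected directed graph with N nodes, girth g, and cyclicity c. Then the exploration penalty ep(G) of G is well-defined (finite), and ep(G) ≤ 2Ng/c − g/c − 2g + c. -/

import Mathlib

namespace Transients

variable {V : Type*}

/-- A walk of length `n` in the graph with edge relation `E`, given by its node
sequence `p 0, p 1, …, p n`. -/
def IsWalk (E : V → V → Prop) (n : ℕ) (p : ℕ → V) : Prop :=
  ∀ k, k < n → E (p k) (p (k + 1))

/-- A closed walk: start node equals end node. -/
def IsClosedWalk (E : V → V → Prop) (n : ℕ) (p : ℕ → V) : Prop :=
  IsWalk E n p ∧ p 0 = p n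

/-- A nonempty elementary closed walk: closed, and no node repeats except start = end. -/
def IsElemClosedWalk (E : V → V → Prop) (n : ℕ) (p : ℕ → V) : Prop :=
  0 < n ∧ IsClosedWalk E n p ∧ ∀ k l, k < n → l < n → p k = p l → k = l

/-- A simple walk: no node is visited twice. -/
def IsSimpleWalk (E : V → V → Prop) (n : ℕ) (p : ℕ → V) : Prop :=
  IsWalk E n p ∧ ∀ k l, k ≤ n → l ≤ n → p k = p l → k = l

def StronglyConnected (E : V → V → Prop) : Prop :=
  ∀ i j : V, ∃ n p, IsWalk E n p ∧ p 0 = i ∧ p n = j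

def NontrivialGraph (E : V → V → Prop) : Prop := ∃ i j, E i j

/-- The weight `w_*` of a walk in an edge-weighted graph. -/
noncomputable def walkWeight (w : V → V → ℝ) (n : ℕ) (p : ℕ → V) : ℝ :=
  ∑ k ∈ Finset.range n, w (p k) (p (k + 1))

/-- The rate ρ(G): supremum of `w_*(γ)/ℓ(γ)` over nonempty closed walks γ. -/
noncomputable def rate (E : V → V → Prop) (w : V → V → ℝ) : ℝ :=
  sSup {x : ℝ | ∃ n p, 0 < n ∧ IsClosedWalk E n p ∧ x = walkWeight w n p / n}

/-- A critical closed walk: nonempty, closed, and its weight is ρ(G) times its length. -/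
def IsCriticalWalk (E : V → V → Prop) (w : V → V → ℝ) (n : ℕ) (p : ℕ → V) : Prop :=
  0 < n ∧ IsClosedWalk E n p ∧ walkWeight w n p = rate E w * n

/-- A critical node: lies on some critical closed walk. -/
def CriticalNode (E : V → V → Prop) (w : V → V → ℝ) (i : V) : Prop :=
  ∃ n p k, IsCriticalWalk E w n p ∧ k ≤ n ∧ p k = i

/-- A critical edge: lies on some critical closed walk. -/
def CriticalEdge (E : V → V → Prop) (w : V → V → ℝ) (i j : V) : Prop :=
  ∃ n p k, IsCriticalWalk E w n p ∧ k < n ∧ p k = i ∧ p (k + 1) = j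

/-- The non-critical rate ρ_nc(G): supremum of mean weights of nonempty closed walks
containing no critical node. -/
noncomputable def ncRate (E : V → V → Prop) (w : V → V → ℝ) : ℝ :=
  sSup {x : ℝ | ∃ n p, 0 < n ∧ IsClosedWalk E n p ∧
    (∀ k, k ≤ n → ¬ CriticalNode E w (p k)) ∧ x = walkWeight w n p / n}

/-- Δ(G), the maximum edge weight. -/
noncomputable def maxWeight (E : V → V → Prop) (w : V → V → ℝ) : ℝ :=
  sSup {x : ℝ | ∃ i j, E i j ∧ x = w i j}

/-- δ(G), the minimum edge weight. -/
noncomputable def minWeight (E : V → V → Prop) (w : V → V → ℝ) : ℝ :=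
  sInf {x : ℝ | ∃ i j, E i j ∧ x = w i j}

open Classical in
/-- Δ_nc(G), the maximum weight of an edge joining two non-critical nodes
(ρ(G) if there is no such edge). -/
noncomputable def maxNcWeight (E : V → V → Prop) (w : V → V → ℝ) : ℝ :=
  if (∃ i j, E i j ∧ ¬ CriticalNode E w i ∧ ¬ CriticalNode E w j) then
    sSup {x : ℝ | ∃ i j, E i j ∧ ¬ CriticalNode E w i ∧ ¬ CriticalNode E w j ∧ x = w i j}
  else rate E w

/-- `d` is the greatest common divisor of the set `S` of naturals. -/
def IsGcdOf (d : ℕ) (S : Set ℕ) : Prop :=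
  (∀ s ∈ S, d ∣ s) ∧ ∀ e : ℕ, (∀ s ∈ S, e ∣ s) → e ∣ d

/-- The set of lengths of nonempty closed walks in the graph. -/
def ClosedLengths (E : V → V → Prop) : Set ℕ :=
  {n | 0 < n ∧ ∃ p, IsClosedWalk E n p}

/-- The set of lengths of nonempty closed walks starting at `i`. -/
def ClosedLengthsAt (E : V → V → Prop) (i : V) : Set ℕ :=
  {n | 0 < n ∧ ∃ p, IsWalk E n p ∧ p 0 = i ∧ p n = i}

/-- There is a (possibly empty) closed walk of length `n` starting at `i`. -/
def HasClosedWalkAt (E : V → V → Prop) (i : V) (n : ℕ) : Prop :=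
  ∃ p, IsWalk E n p ∧ p 0 = i ∧ p n = i

/-- cd(G), the cab driver's diameter: the maximum length of simple walks. -/
noncomputable def cabDiameter (E : V → V → Prop) : ℕ :=
  sSup {n | ∃ p, IsSimpleWalk E n p}

/-- cr(G), the circumference: the maximum length of nonempty elementary closed walks. -/
noncomputable def circumference (E : V → V → Prop) : ℕ :=
  sSup {n | ∃ p, IsElemClosedWalk E n p}

/-- `g` is the girth of the graph: the minimum length of nonempty elementary closed walks. -/
def IsGirth (E : V → V → Prop) (g : ℕ) : Prop :=
  IsLeast {n | ∃ p, IsElemClosedWalk E n p} g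

/-- `ep` is the exploration penalty of a graph of cyclicity `c`: the least `m` such that
for every node `i` and every multiple `n` of `c` with `n ≥ m` there is a closed walk
of length `n` starting at `i`. -/
def IsEp (E : V → V → Prop) (c ep : ℕ) : Prop :=
  IsLeast {m | ∀ i : V, ∀ n : ℕ, c ∣ n → m ≤ n → HasClosedWalkAt E i n} ep

/-- `i` and `j` lie in the same strongly connected component of the graph. -/
def SameComp (E : V → V → Prop) (i j : V) : Prop :=
  (∃ n p, IsWalk E n p ∧ p 0 = i ∧ p n = j) ∧ (∃ n p, IsWalk E n p ∧ p 0 = j ∧ p n = i)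

/-- `m` is the exploration penalty of the strongly connected component of `k`
(a component of cyclicity `c`). -/
def IsCompEp (E : V → V → Prop) (k : V) (c m : ℕ) : Prop :=
  IsLeast {m' | ∀ i : V, SameComp E k i → ∀ n : ℕ, c ∣ n → m' ≤ n → HasClosedWalkAt E i n} m

/-- Max-plus matrix product. -/
noncomputable def mpMul {N : ℕ} (A B : Matrix (Fin N) (Fin N) (WithBot ℝ)) :
    Matrix (Fin N) (Fin N) (WithBot ℝ) :=
  fun i j => Finset.univ.sup fun k => A i k + B k j

/-- Max-plus matrix power, `A^{⊗n}`. -/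
noncomputable def mpPow {N : ℕ} (A : Matrix (Fin N) (Fin N) (WithBot ℝ)) :
    ℕ → Matrix (Fin N) (Fin N) (WithBot ℝ)
  | 0 => fun i j => if i = j then (0 : WithBot ℝ) else ⊥
  | n + 1 => mpMul A (mpPow A n)

/-- Max-plus matrix-vector product. -/
noncomputable def mpVec {N : ℕ} (A : Matrix (Fin N) (Fin N) (WithBot ℝ))
    (v : Fin N → WithBot ℝ) : Fin N → WithBot ℝ :=
  fun i => Finset.univ.sup fun j => A i j + v j

/-- The edge relation of the weighted graph `G(A)`. -/
def mEdge {N : ℕ} (A : Matrix (Fin N) (Fin N) (WithBot ℝ)) : Fin N → Fin N → Prop :=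
  fun i j => A i j ≠ ⊥

/-- The edge weights of the weighted graph `G(A)`. -/
noncomputable def mWeight {N : ℕ} (A : Matrix (Fin N) (Fin N) (WithBot ℝ)) :
    Fin N → Fin N → ℝ :=
  fun i j => (A i j).unbotD 0

/-- `A` is irreducible: `G(A)` is strongly connected and has at least one edge. -/
def MPIrreducible {N : ℕ} (A : Matrix (Fin N) (Fin N) (WithBot ℝ)) : Prop :=
  StronglyConnected (mEdge A) ∧ NontrivialGraph (mEdge A)

/-- The linear max-plus system `x(n) = A^{⊗n} ⊗ v`. -/
noncomputable def mpSystem {N : ℕ} (A : Matrix (Fin N) (Fin N) (WithBot ℝ)) (v : Fin N → ℝ)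
    (n : ℕ) : Fin N → WithBot ℝ :=
  mpVec (mpPow A n) fun j => (v j : WithBot ℝ)

/-- The set of indices from which the system `x_{A,v}` is periodic with increment
`p·ρ(A)`; its least element is the transient `n_{A,v}`. -/
noncomputable def SysTransientSet {N : ℕ} (A : Matrix (Fin N) (Fin N) (WithBot ℝ))
    (v : Fin N → ℝ) : Set ℕ :=
  {n₀ | ∃ p : ℕ, 0 < p ∧ ∀ n, n₀ ≤ n → ∀ i,
    mpSystem A v (n + p) i
      = mpSystem A v n i + ((p * rate (mEdge A) (mWeight A) : ℝ) : WithBot ℝ)}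

/-- The set of indices from which the powers of `A` are periodic with increment
`p·ρ(A)`; its least element is the transient `n_A`. -/
noncomputable def MatTransientSet {N : ℕ} (A : Matrix (Fin N) (Fin N) (WithBot ℝ)) : Set ℕ :=
  {n₀ | ∃ p : ℕ, 0 < p ∧ ∀ n, n₀ ≤ n → ∀ i j,
    mpPow A (n + p) i j
      = mpPow A n i j + ((p * rate (mEdge A) (mWeight A) : ℝ) : WithBot ℝ)}

/-- `‖v‖ = max_i v_i − min_i v_i`. -/
noncomputable def vnorm {N : ℕ} (v : Fin N → ℝ) : ℝ :=
  sSup (Set.range v) - sInf (Set.range v)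

/-!
Fix a shortest cycle `γ`, of length `g`. Since `c` is also the gcd of the lengths of the
elementary cycles, there is a chain `g = d₀ > d₁ = gcd(d₀, λ₁) > ⋯ > d_r = c` with
elementary cycle lengths `λⱼ`; each step at least halves, so `r < g/c`. From any node `i`,
walk to a cycle of length `λ₁` (at most `N - λ₁` steps), wind around it `m₁` times, go on to
the next cycle of the chain, and so on, then to `γ`, around `γ`, and back to `i` (at most
`N - g` steps). Bézout along the chain makes the total length hit any residue modulo `g`
allowed by `c` with `∑ mⱼ < g/c`, and windings around `γ` supply the remaining multiple of
`g`. The detours add up to at most `(g/c - 1)(2N - g) + 2N - g - 1 ≤ 2Ng/c - g/c - 2g + c`.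
-/

section Walks

variable {E : V → V → Prop} {i j k : V} {m n : ℕ} {p : ℕ → V}

def HasWalk (E : V → V → Prop) (n : ℕ) (i j : V) : Prop :=
  ∃ p, IsWalk E n p ∧ p 0 = i ∧ p n = j

theorem StronglyConnected.exists_hasWalk (h : StronglyConnected E) (i j : V) :
    ∃ n, HasWalk E n i j :=
  h i j

theorem HasWalk.trans (h₁ : HasWalk E m i j) (h₂ : HasWalk E n j k) :
    HasWalk E (m + n) i k := by
  obtain ⟨p, hp, rfl, rfl⟩ := h₁
  obtain ⟨q, hq, hq0, rfl⟩ := h₂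
  refine ⟨fun t => if t ≤ m then p t else q (t - m), fun t ht => ?_, by simp, ?_⟩
  · rcases lt_trichotomy t m with h | rfl | h
    · simpa [h.le, Nat.succ_le_of_lt h] using hp t h
    · simpa [hq0] using hq 0 (by omega)
    · simpa [h.not_ge, (h.trans (Nat.lt_succ_self t)).not_ge, Nat.sub_add_comm h.le]
        using hq (t - m) (by omega)
  · rcases Nat.eq_zero_or_pos n with rfl | hn
    · simp [hq0]
    · simp [show ¬ m + n ≤ m by omega]

theorem HasWalk.flip (h : HasWalk E n i j) : HasWalk (flip E) n j i := by
  obtain ⟨p, hp, rfl, rfl⟩ := h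
  refine ⟨fun t => p (n - t), fun t ht => ?_, by simp, by simp⟩
  show E (p (n - (t + 1))) (p (n - t))
  simpa [show n - t = n - (t + 1) + 1 by omega] using hp (n - (t + 1)) (by omega)

theorem StronglyConnected.flip (h : StronglyConnected E) : StronglyConnected (flip E) :=
  fun i j => (h.exists_hasWalk j i).imp fun _ => HasWalk.flip

theorem IsWalk.hasWalk_sub {k l : ℕ} (hp : IsWalk E n p) (hkl : k ≤ l) (hl : l ≤ n) :
    HasWalk E (l - k) (p k) (p l) :=
  ⟨fun t => p (k + t), fun t _ => hp (k + t) (by omega), rfl,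
    congrArg p (Nat.add_sub_cancel' hkl)⟩

theorem IsWalk.hasWalk_splice {k l : ℕ} (hp : IsWalk E n p) (hkl : k < l) (hl : l ≤ n)
    (he : p k = p l) : HasWalk E (n - (l - k)) (p 0) (p n) := by
  have h₁ := hp.hasWalk_sub (Nat.zero_le k) (hkl.le.trans hl)
  have h₂ := hp.hasWalk_sub hl le_rfl
  rw [he] at h₁
  have h := h₁.trans h₂
  rwa [show k - 0 + (n - l) = n - (l - k) by omega] at h

end Walks

section Cycles

variable {E : V → V → Prop} {L : ℕ} {p : ℕ → V}

theorem IsClosedWalk.hasWalk_mod (h : IsClosedWalk E L p) (hL : 0 < L) (t r : ℕ) :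
    HasWalk E r (p (t % L)) (p ((t + r) % L)) := by
  have step : ∀ s < L, E (p s) (p ((s + 1) % L)) := by
    intro s hs
    rcases (show s + 1 ≤ L from hs).lt_or_eq with hs' | hs'
    · rw [Nat.mod_eq_of_lt hs']
      exact h.1 s hs
    · rw [hs', Nat.mod_self, h.2, ← hs']
      exact h.1 s hs
  refine ⟨fun j => p ((t + j) % L), fun j _ => ?_, rfl, rfl⟩
  simpa [← Nat.add_assoc, Nat.mod_add_mod] using step _ (Nat.mod_lt (t + j) hL)

theorem IsClosedWalk.hasWalk_add_mul (h : IsClosedWalk E L p) {t t' : ℕ} (ht : t < L)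
    (ht' : t' < L) (k : ℕ) : HasWalk E ((t' + L - t) % L + k * L) (p t) (p t') := by
  have hw := h.hasWalk_mod (by omega) t ((t' + L - t) % L + k * L)
  rwa [Nat.mod_eq_of_lt ht, ← Nat.add_assoc, Nat.add_mul_mod_self_right, Nat.add_mod_mod,
    show t + (t' + L - t) = t' + L by omega, Nat.add_mod_right, Nat.mod_eq_of_lt ht'] at hw

theorem IsElemClosedWalk.card_image_range [DecidableEq V] (h : IsElemClosedWalk E L p) :
    ((Finset.range L).image p).card = L := by
  rw [Finset.card_image_of_injOn, Finset.card_range]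
  intro a ha b hb hab
  exact h.2.2 a b (by simpa using ha) (by simpa using hb) hab

theorem IsElemClosedWalk.le_card [Fintype V] (h : IsElemClosedWalk E L p) :
    L ≤ Fintype.card V := by
  classical
  exact h.card_image_range ▸ Finset.card_le_univ _

/-- A shortest walk from `x` into `S` visits no node twice and meets `S` only at its end. -/
theorem exists_hasWalk_add_card_le [Fintype V] {x : V} (S : Finset V)
    (h : ∃ n, ∃ y ∈ S, HasWalk E n x y) :
    ∃ n, ∃ y ∈ S, HasWalk E n x y ∧ n + S.card ≤ Fintype.card V := by
  classical
  obtain ⟨y, hyS, q, hq, hq0, hqn⟩ := Nat.find_spec h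
  set n := Nat.find h
  have outside : ∀ t < n, q t ∉ S := fun t ht hS =>
    Nat.find_min h ht ⟨q t, hS, by simpa [hq0] using hq.hasWalk_sub (Nat.zero_le t) ht.le⟩
  have inj : Set.InjOn q (Finset.range n) := by
    suffices ∀ k l, k < l → l < n → q k ≠ q l by
      intro k hk l hl hkl
      simp only [Finset.coe_range, Set.mem_Iio] at hk hl
      by_contra hne
      rcases lt_or_gt_of_ne hne with h' | h'
      exacts [this k l h' hl hkl, this l k h' hk hkl.symm]
    intro k l hkl hl he
    exact Nat.find_min h (show n - (l - k) < n by omega)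
      ⟨y, hyS, hq0 ▸ hqn ▸ hq.hasWalk_splice hkl hl.le he⟩
  have hsub : (Finset.range n).image q ⊆ Sᶜ := fun z hz => by
    obtain ⟨t, ht, rfl⟩ := Finset.mem_image.1 hz
    exact Finset.mem_compl.2 (outside t (Finset.mem_range.1 ht))
  have hcard := Finset.card_le_card hsub
  rw [Finset.card_image_of_injOn inj, Finset.card_range, Finset.card_compl] at hcard
  exact ⟨n, y, hyS, ⟨q, hq, hq0, hqn⟩, by have := S.card_le_univ; omega⟩

theorem StronglyConnected.exists_hasWalk_add_card_le [Fintype V] (hsc : StronglyConnected E)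
    {S : Finset V} (hS : S.Nonempty) (x : V) :
    ∃ n, ∃ y ∈ S, HasWalk E n x y ∧ n + S.card ≤ Fintype.card V :=
  Transients.exists_hasWalk_add_card_le S <| by
    obtain ⟨y, hy⟩ := hS
    obtain ⟨n, hn⟩ := hsc.exists_hasWalk x y
    exact ⟨n, y, hy, hn⟩

/-- Every closed walk splits into elementary closed walks. -/
theorem dvd_of_hasWalk_of_forall_elem {e : ℕ} (he : ∀ L p, IsElemClosedWalk E L p → e ∣ L)
    {n : ℕ} {i : V} (h : HasWalk E n i i) : e ∣ n := by
  induction n using Nat.strong_induction_on generalizing i with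
  | _ n ih =>
  obtain ⟨q, hq, rfl, hqn⟩ := h
  by_cases inj : ∀ k l, k < n → l < n → q k = q l → k = l
  · rcases Nat.eq_zero_or_pos n with rfl | hn
    · exact dvd_zero e
    · exact he n q ⟨hn, ⟨hq, hqn.symm⟩, inj⟩
  · suffices ∀ k l, k < l → l < n → q k = q l → e ∣ n by
      push Not at inj
      obtain ⟨k, l, hk, hl, he, hne⟩ := inj
      rcases lt_or_gt_of_ne hne with h' | h'
      exacts [this k l h' hl he, this l k h' hk he.symm]
    intro k l hkl hl he
    have inner := ih (l - k) (by omega) (he ▸ hq.hasWalk_sub hkl.le hl.le)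
    have outer := ih (n - (l - k)) (by omega) (hqn ▸ hq.hasWalk_splice hkl hl.le he)
    simpa [show l - k + (n - (l - k)) = n by omega] using Nat.dvd_add inner outer

end Cycles

section Gcd

variable {E : V → V → Prop} {c n : ℕ} {i : V}

theorem IsGcdOf.dvd_of_hasClosedWalkAt (hc : IsGcdOf c (ClosedLengths E))
    (h : HasClosedWalkAt E i n) : c ∣ n := by
  rcases n.eq_zero_or_pos with rfl | hn
  · exact dvd_zero c
  · obtain ⟨p, hp, h0, hn'⟩ := h
    exact hc.1 n ⟨hn, p, hp, h0.trans hn'.symm⟩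

theorem IsGcdOf.elemLengths (hc : IsGcdOf c (ClosedLengths E)) :
    IsGcdOf c {L | ∃ p, IsElemClosedWalk E L p} :=
  ⟨fun L ⟨p, hp⟩ => hc.1 L ⟨hp.1, p, hp.2.1⟩, fun e he => hc.2 e fun _ ⟨_, p, hp⟩ =>
    dvd_of_hasWalk_of_forall_elem (fun L p h => he L ⟨p, h⟩) ⟨p, hp.1, rfl, hp.2.symm⟩⟩

end Gcd

theorem exists_modEq_mul {d : ℕ} (hd : 0 < d) (a : ℕ) {D : ℤ} (hD : (d.gcd a : ℤ) ∣ D) :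
    ∃ m : ℕ, d.gcd a * (m + 1) ≤ d ∧ D ≡ m * a [ZMOD d] := by
  set e := d.gcd a
  obtain ⟨A, hA⟩ : e ∣ d := d.gcd_dvd_left a
  obtain ⟨a', ha'⟩ : e ∣ a := d.gcd_dvd_right a
  obtain ⟨D', rfl⟩ := hD
  have hA0 : (0 : ℤ) < A := by
    have : 0 < A := Nat.pos_of_ne_zero (by rintro rfl; omega)
    exact_mod_cast this
  have bezout : (e : ℤ) = d * d.gcdA a + a * d.gcdB a := Nat.gcd_eq_gcd_ab d a
  set m₀ := D' * d.gcdB a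
  have h₁ : (e : ℤ) * D' ≡ m₀ * a [ZMOD d] := Int.modEq_iff_dvd.2
    ⟨-(D' * d.gcdA a), by rw [bezout]; ring⟩
  have h₂ : m₀ * a ≡ (m₀ % A) * a [ZMOD d] :=
    ((Int.mod_modEq m₀ A).symm.mul_right' (c := (a : ℤ))).of_dvd
      ⟨a', by rw [ha', hA]; push_cast; ring⟩
  refine ⟨(m₀ % A).toNat, ?_, ?_⟩
  · have : (m₀ % A).toNat < A := by
      have := Int.emod_lt_of_pos m₀ hA0
      omega
    rw [hA]
    exact Nat.mul_le_mul_left e this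
  · rw [Int.toNat_of_nonneg (Int.emod_nonneg m₀ hA0.ne')]
    exact h₁.trans h₂

def windingLength (m l : List ℕ) : ℕ := (List.zipWith (· * ·) m l).sum

@[simp]
theorem windingLength_cons (k a : ℕ) (m l : List ℕ) :
    windingLength (k :: m) (a :: l) = k * a + windingLength m l := by
  simp [windingLength]

@[simp]
theorem windingLength_nil_left (l : List ℕ) : windingLength [] l = 0 := by
  simp [windingLength]

@[simp]
theorem windingLength_replicate_zero (n : ℕ) (l : List ℕ) :
    windingLength (List.replicate n 0) l = 0 := by
  induction l generalizing n with
  | nil => cases n <;> simp [windingLength]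
  | cons a l ih => cases n <;> simp [List.replicate_succ, ih]

theorem windingLength_le {l : List ℕ} {B : ℕ} (hl : ∀ a ∈ l, a ≤ B) (m : List ℕ) :
    windingLength m l ≤ m.sum * B := by
  induction l generalizing m with
  | nil => cases m <;> simp [windingLength]
  | cons a l ih =>
    cases m with
    | nil => simp
    | cons k m =>
      simp only [windingLength_cons, List.sum_cons, Nat.add_mul]
      exact Nat.add_le_add (Nat.mul_le_mul_left k (hl a (by simp)))
        (ih (fun b hb => hl b (by simp [hb])) m)

/-- Repeatedly replacing `d` by `gcd d a` for some `a ∈ P` not divisible by `d` at least halves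
it and reaches `c`; along the way, Bézout solves every congruence modulo `d` with few windings. -/
theorem IsGcdOf.exists_chain {P : Set ℕ} {c : ℕ} (hc : IsGcdOf c P) {d : ℕ} (hd : 0 < d)
    (hcd : c ∣ d) :
    ∃ l : List ℕ, (∀ a ∈ l, a ∈ P) ∧ c * (l.length + 1) ≤ d ∧
      ∀ D : ℤ, (c : ℤ) ∣ D → ∃ m : List ℕ, m.length = l.length ∧ c * (m.sum + 1) ≤ d ∧
        D ≡ windingLength m l [ZMOD d] := by
  induction d using Nat.strong_induction_on with
  | _ d ih =>
  by_cases hall : ∀ a ∈ P, d ∣ a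
  · obtain rfl : d = c := Nat.dvd_antisymm (hc.2 d hall) hcd
    exact ⟨[], by simp, by simp, fun D hD => ⟨[], rfl, by simp,
      by simpa using Int.modEq_zero_iff_dvd.2 hD⟩⟩
  push Not at hall
  obtain ⟨a, haP, hda⟩ := hall
  set e := d.gcd a
  have he : 0 < e := Nat.gcd_pos_of_pos_left a hd
  obtain ⟨k, hk⟩ : e ∣ d := d.gcd_dvd_left a
  have hk2 : 2 ≤ k := by
    rcases k with _ | _ | k
    · omega
    · exact (hda (by rw [hk, Nat.mul_one]; exact d.gcd_dvd_right a)).elim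
    · omega
  have hce : c ∣ e := Nat.dvd_gcd hcd (hc.1 a haP)
  have hce' : c ≤ e := Nat.le_of_dvd he hce
  obtain ⟨l, hlP, hlen, hsolve⟩ := ih e (by nlinarith) he hce
  refine ⟨a :: l, by simpa [haP] using hlP, by simp only [List.length_cons]; nlinarith,
    fun D hD => ?_⟩
  obtain ⟨m, hm, hmsum, hmod⟩ := hsolve D hD
  obtain ⟨m₁, hm₁, hmod₁⟩ := exists_modEq_mul hd a hmod.symm.dvd
  refine ⟨m₁ :: m, by simp [hm], by simp only [List.sum_cons]; nlinarith, ?_⟩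
  simpa [add_comm] using hmod₁.add_right (windingLength m l : ℤ)

section Assembly

variable [Fintype V] {E : V → V → Prop}

theorem StronglyConnected.exists_hasWalk_through_cycles (hsc : StronglyConnected E)
    {S : Finset V} (hS : S.Nonempty) (l : List ℕ) (hl : ∀ a ∈ l, ∃ p, IsElemClosedWalk E a p)
    (x : V) :
    ∃ b, ∃ y ∈ S, b ≤ (l.map (Fintype.card V - ·)).sum + (Fintype.card V - S.card) ∧
      ∀ m : List ℕ, m.length = l.length → HasWalk E (b + windingLength m l) x y := by
  classical
  induction l generalizing x with
  | nil =>
    obtain ⟨b, y, hy, hw, hb⟩ := hsc.exists_hasWalk_add_card_le hS x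
    refine ⟨b, y, hy, by simp; omega, fun m hm => ?_⟩
    simpa [List.length_eq_zero_iff.1 hm] using hw
  | cons a l ih =>
    obtain ⟨p, hp⟩ := hl a (by simp)
    obtain ⟨e, z, hz, hxz, he⟩ := hsc.exists_hasWalk_add_card_le
      (S := (Finset.range a).image p)
      ⟨p 0, Finset.mem_image_of_mem p (Finset.mem_range.2 hp.1)⟩ x
    obtain ⟨s, hs, rfl⟩ := Finset.mem_image.1 hz
    obtain ⟨b, y, hy, hb, hw⟩ := ih (fun b hb => hl b (by simp [hb])) (p s)
    rw [hp.card_image_range] at he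
    refine ⟨e + b, y, hy, by simp; omega, ?_⟩
    rintro (_ | ⟨k, m⟩) hm
    · simp at hm
    · have wind : HasWalk E (k * a) (p s) (p s) := by
        simpa using hp.2.1.hasWalk_add_mul (Finset.mem_range.1 hs) (Finset.mem_range.1 hs) k
      have hw' := (hxz.trans wind).trans (hw m (by simpa using hm))
      rwa [show e + k * a + (b + windingLength m l) = e + b + windingLength (k :: m) (a :: l) by
        simp; ring] at hw'

theorem StronglyConnected.exists_closedWalk_family (hsc : StronglyConnected E) {g : ℕ}
    (hg : IsGirth E g) (l : List ℕ) (hl : ∀ a ∈ l, ∃ p, IsElemClosedWalk E a p) (i : V) :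
    ∃ base, base ≤ l.length * (Fintype.card V - g) + (2 * Fintype.card V - g - 1) ∧
      ∀ m k, m.length = l.length → HasClosedWalkAt E i (base + windingLength m l + k * g) := by
  classical
  obtain ⟨⟨γ, hγ⟩, hgmin⟩ := hg
  have hS : ((Finset.range g).image γ).Nonempty :=
    ⟨γ 0, Finset.mem_image_of_mem γ (Finset.mem_range.2 hγ.1)⟩
  obtain ⟨b, _, hy, hb, hw⟩ := hsc.exists_hasWalk_through_cycles hS l hl i
  obtain ⟨t, ht, rfl⟩ := Finset.mem_image.1 hy
  obtain ⟨f, _, hz, hf, hfb⟩ := hsc.flip.exists_hasWalk_add_card_le hS i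
  obtain ⟨t', ht', rfl⟩ := Finset.mem_image.1 hz
  rw [hγ.card_image_range] at hb hfb
  have hmap : (l.map (Fintype.card V - ·)).sum ≤ l.length * (Fintype.card V - g) := by
    simpa using List.sum_le_card_nsmul (l.map (Fintype.card V - ·)) (Fintype.card V - g)
      fun x hx => by
        obtain ⟨a, ha, rfl⟩ := List.mem_map.1 hx
        exact Nat.sub_le_sub_left (hgmin (hl a ha)) _
  refine ⟨b + (t' + g - t) % g + f, ?_, fun m k hm => ?_⟩
  · have := Nat.mod_lt (t' + g - t) hγ.1
    have := hγ.le_card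
    omega
  · have hw' := ((hw m hm).trans (hγ.2.1.hasWalk_add_mul (Finset.mem_range.1 ht)
      (Finset.mem_range.1 ht') k)).trans hf.flip
    rwa [show b + windingLength m l + ((t' + g - t) % g + k * g) + f
      = b + (t' + g - t) % g + f + windingLength m l + k * g by ring] at hw'

end Assembly

def explorationBound (N g c : ℕ) : ℕ := (g / c - 1) * (2 * N - g) + (2 * N - g - 1)

theorem cast_explorationBound_le {N g c : ℕ} (hg : 0 < g) (hgN : g ≤ N) (hcg : c ∣ g) :
    (explorationBound N g c : ℝ) ≤ 2 * (N : ℝ) * g / c - (g : ℝ) / c - 2 * g + c := by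
  obtain ⟨q, rfl⟩ := hcg
  have hc : 0 < c := Nat.pos_of_mul_pos_right hg
  have hq : 1 ≤ q := Nat.pos_of_mul_pos_left hg
  have hcR : (c : ℝ) ≠ 0 := by positivity
  have hslack : (0 : ℝ) ≤ (q - 1) * (c * (q - 1) - 1) := by
    rcases hq.eq_or_lt with rfl | hq2
    · simp
    · have hq2' : (2 : ℝ) ≤ q := by exact_mod_cast hq2
      have hc' : (1 : ℝ) ≤ c := by exact_mod_cast hc
      exact mul_nonneg (by linarith) (by nlinarith)
  rw [explorationBound, Nat.mul_div_cancel_left q hc]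
  push_cast [Nat.cast_sub hq, Nat.cast_sub (by omega : c * q ≤ 2 * N),
    Nat.cast_sub (by omega : 1 ≤ 2 * N - c * q)]
  field_simp
  nlinarith

theorem StronglyConnected.hasClosedWalkAt_of_explorationBound_le [Fintype V]
    {E : V → V → Prop} (hsc : StronglyConnected E) {c g : ℕ} (hc : IsGcdOf c (ClosedLengths E))
    (hg : IsGirth E g) (i : V) {n : ℕ} (hcn : c ∣ n)
    (hn : explorationBound (Fintype.card V) g c ≤ n) : HasClosedWalkAt E i n := by
  obtain ⟨γ, hγ⟩ := hg.1
  have hP := hc.elemLengths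
  have hc0 : 0 < c := Nat.pos_of_dvd_of_pos (hP.1 g ⟨γ, hγ⟩) hγ.1
  obtain ⟨l, hlP, hlen, hsolve⟩ := hP.exists_chain hγ.1 (hP.1 g ⟨γ, hγ⟩)
  obtain ⟨base, hbase, hfam⟩ := hsc.exists_closedWalk_family hg l hlP i
  have hcb : c ∣ base := hc.dvd_of_hasClosedWalkAt <| by
    simpa using hfam (List.replicate l.length 0) 0 (by simp)
  obtain ⟨m, hm, hmsum, hmod⟩ := hsolve (n - base) (Int.dvd_sub (by exact_mod_cast hcn)
    (by exact_mod_cast hcb))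
  have hwind : windingLength m l ≤ m.sum * Fintype.card V :=
    windingLength_le (fun a ha => (hlP a ha).elim fun _ h => h.le_card) m
  have hlen' := (Nat.le_div_iff_mul_le hc0).2 (by linarith : (l.length + 1) * c ≤ g)
  have hmsum' := (Nat.le_div_iff_mul_le hc0).2 (by linarith : (m.sum + 1) * c ≤ g)
  have hfit : base + windingLength m l ≤ n := by
    set N := Fintype.card V
    have hgN := hγ.le_card
    calc base + windingLength m l
        ≤ (g / c - 1) * (N - g) + (2 * N - g - 1) + (g / c - 1) * N := by
          gcongr
          · exact hbase.trans (by gcongr; omega)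
          · exact hwind.trans (by gcongr; omega)
      _ = explorationBound N g c := by
          rw [explorationBound, show 2 * N - g = (N - g) + N by omega, Nat.mul_add]
          ring
      _ ≤ n := hn
  have hmod' : base + windingLength m l ≡ n [MOD g] := Int.natCast_modEq_iff.1 <| by
    simpa [add_comm] using (hmod.add_right (base : ℤ)).symm
  obtain ⟨k, hk⟩ := (Nat.modEq_iff_dvd' hfit).1 hmod'
  rw [show n = base + windingLength m l + k * g by rw [Nat.mul_comm, ← hk]; omega]
  exact hfam m k hm

theorem stmt_8_general {V : Type*} [Fintype V] (E : V → V → Prop)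
    (hsc : StronglyConnected E)
    (c g : ℕ) (hc : IsGcdOf c (ClosedLengths E)) (hg : IsGirth E g) :
    ∃ ep : ℕ, IsEp E c ep ∧
      (ep : ℝ) ≤ 2 * (Fintype.card V : ℝ) * g / c - (g : ℝ) / c - 2 * g + c := by
  obtain ⟨γ, hγ⟩ := hg.1
  have hbound : explorationBound (Fintype.card V) g c ∈
      {m | ∀ i : V, ∀ n : ℕ, c ∣ n → m ≤ n → HasClosedWalkAt E i n} :=
    fun i _ hcn hn => hsc.hasClosedWalkAt_of_explorationBound_le hc hg i hcn hn
  refine ⟨_, isLeast_csInf ⟨_, hbound⟩, ?_⟩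
  calc _ ≤ (explorationBound (Fintype.card V) g c : ℝ) := by exact_mod_cast csInf_le' hbound
    _ ≤ _ := cast_explorationBound_le hγ.1 hγ.le_card (hc.elemLengths.1 g ⟨γ, hγ⟩)

/-- The exploration penalty `ep(G)` of a nontrivial strongly connected
graph with `N` nodes, girth `g` and cyclicity `c` is well-defined and satisfies
`ep(G) ≤ 2Ng/c − g/c − 2g + c`. -/
theorem stmt_8 {V : Type*} [Fintype V] (E : V → V → Prop)
    (hnt : NontrivialGraph E) (hsc : StronglyConnected E)
    (c g : ℕ) (hc : IsGcdOf c (ClosedLengths E)) (hg : IsGirth E g) :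
    ∃ ep : ℕ, IsEp E c ep ∧
      (ep : ℝ) ≤ 2 * (Fintype.card V : ℝ) * g / c - (g : ℝ) / c - 2 * g + c :=
  stmt_8_general E hsc c g hc hg

end Transients
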